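/- Let ã and v be finitely supported ℤ₂-valued 0-cochains on the cubical lattice ℤ². Then, in ℤ₂, ∫ ((ã+v) ∪ δ(ã+v)) ∪ δ(ã+v) + ∫ (ã ∪ δã) ∪ δã = ∫ [ (δã ∪ v) ∪ δã + δv ∪_1 ((δã + δv) ∪ δã) + (δã ∪ δv) ∪ v + (v ∪ δv) ∪ δv ], where ∫ denotes the sum of a 2-cochain over all 2-cells of the lattice and all triple cup products are parenthesized as written. -/

import Mathlib

/-!
On a unit square, the explicit formulas for `∪₀` and `∪₁` turn the integrands of both sides
into Boolean functions of the eight corner values of `ã` and `v`. Their sum is the coboundary,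
on that square, of the 1-cochain `λ = (ã ∪ δv + δv ∪ v) ∪ ã`: this is an identity between
Boolean functions of eight variables, checked on all `2⁸` inputs. Summed over all squares, a
coboundary integrates to zero, since every edge is a face of exactly two squares and we work
mod 2; finite support makes all these sums finite.
-/

/-- The three possible entries of a cell label of the hypercube:
`dot` = `•` (a spanned direction), `pls` = `+`, `mns` = `−`. -/
inductive Sgn : Type
  | dot : Sgn
  | pls : Sgn
  | mns : Sgn
  deriving DecidableEq

instance instFintypeSgn : Fintype Sgn :=
  ⟨{Sgn.dot, Sgn.pls, Sgn.mns}, fun x => by cases x <;> simp⟩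

/-- A cell of the `d`-dimensional hypercube, labeled by a tuple in `{•,+,−}^d`. -/
abbrev Cell (d : ℕ) := Fin d → Sgn

/-- A `ℤ₂`-cochain on the `d`-dimensional hypercube. -/
abbrev Cochain (d : ℕ) := Cell d → ZMod 2

/-- The top cell `(•,…,•)`. -/
def topCell (d : ℕ) : Cell d := fun _ => Sgn.dot

/-- The set of coordinates of a cell labeled `•`. -/
def dots {d : ℕ} (w : Cell d) : Finset (Fin d) :=
  Finset.univ.filter (fun j => w j = Sgn.dot)

/-- The coboundary of a `ℤ₂`-cochain: `(δα)(w)` is the sum of `α` over all cells obtained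
from `w` by replacing exactly one entry equal to `•` by `+` or by `−`. -/
def delta {d : ℕ} (α : Cochain d) : Cochain d := fun w =>
  ∑ j ∈ dots w, (α (Function.update w j Sgn.pls) + α (Function.update w j Sgn.mns))

/-- The set of coordinates where both `z` and `z'` are `•`. -/
def bothDot {d : ℕ} (z z' : Cell d) : Finset (Fin d) :=
  Finset.univ.filter (fun j => z j = Sgn.dot ∧ z' j = Sgn.dot)

/-- The allowed values of `(z_j, z'_j)` at a coordinate `j` not in the common-`•` set `I`:
`(+,•)` or `(•,−)` when `ℓ(j) = #{i ∈ I : i < j}` is even, and `(−,•)` or `(•,+)` when it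
is odd. -/
def pairCond {d : ℕ} (I : Finset (Fin d)) (j : Fin d) (a b : Sgn) : Prop :=
  if (I.filter (fun i => i < j)).card % 2 = 0 then
    (a = Sgn.pls ∧ b = Sgn.dot) ∨ (a = Sgn.dot ∧ b = Sgn.mns)
  else
    (a = Sgn.mns ∧ b = Sgn.dot) ∨ (a = Sgn.dot ∧ b = Sgn.pls)

/-- The pairs `(z,z')` appearing in the `m`-th higher cup product evaluated on the cell `w`:
the entries of `w` equal to `+` or `−` are fixed in both arguments, there are exactly `m`
coordinates where both `z` and `z'` are `•`, and at the remaining `•`-coordinates of `w`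
the parity condition `pairCond` holds. -/
def IntPair {d : ℕ} (m : ℕ) (w z z' : Cell d) : Prop :=
  (∀ j, w j ≠ Sgn.dot → z j = w j ∧ z' j = w j) ∧
    (bothDot z z').card = m ∧
    ∀ j, w j = Sgn.dot → j ∉ bothDot z z' → pairCond (bothDot z z') j (z j) (z' j)

open Classical in
/-- The finite set of pairs in `Int_m` relative to the cell `w`. -/
noncomputable def intPairs {d : ℕ} (m : ℕ) (w : Cell d) : Finset (Cell d × Cell d) :=
  Finset.univ.filter (fun p => IntPair m w p.1 p.2)

/-- The higher cup product `α ∪_m β` of `ℤ₂`-cochains: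
`(α ∪_m β)(w) = Σ_{(z,z') ∈ Int_m(w)} α(z)·β(z')`. -/
noncomputable def cup {d : ℕ} (m : ℕ) (α β : Cochain d) : Cochain d := fun w =>
  ∑ p ∈ intPairs m w, α p.1 * β p.2

/-- A point of the cubical lattice `ℤ^d`. -/
abbrev Pt (d : ℕ) := Fin d → ℤ

/-- A cell of the cubical lattice `ℤ^d`: a pair `(x, S)` with `x ∈ ℤ^d` and
`S ⊆ {1,…,d}`, representing `∏_{i∈S}[x_i, x_i+1] × ∏_{i∉S}{x_i}`;
its dimension is `|S|`, and a `d`-cube is a cell with `S = univ`. -/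
abbrev LatCell (d : ℕ) := Pt d × Finset (Fin d)

/-- A `ℤ₂`-cochain on the cubical lattice `ℤ^d`. -/
abbrev LatCochain (d : ℕ) := LatCell d → ZMod 2

/-- The pairs `(z,z')` of tuples in `{•,+,−}^d` appearing in the `m`-th higher cup product
evaluated on a cell with spanned directions `S`: entries outside `S` are a fixed dummy
value (`+`, irrelevant to the evaluated subcells), there are exactly `m` coordinates where
both `z` and `z'` are `•`, and at the remaining coordinates of `S` the parity condition
`pairCond` of `Int_m` holds. -/
def IntPairS {d : ℕ} (m : ℕ) (S : Finset (Fin d)) (z z' : Fin d → Sgn) : Prop :=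
  (∀ j ∉ S, z j = Sgn.pls ∧ z' j = Sgn.pls) ∧
    (bothDot z z').card = m ∧
    ∀ j ∈ S, j ∉ bothDot z z' → pairCond (bothDot z z') j (z j) (z' j)

/-- The subcell of the lattice cell `(x, S)` determined by the tuple `z` on the spanned
directions `S`: direction `j ∈ S` with `z j = •` stays spanned, `z j = +` picks the larger
face (coordinate `x j + 1`), `z j = −` picks the smaller face (coordinate `x j`);
coordinates outside `S` are held fixed. -/
def cellFrom {d : ℕ} (x : Pt d) (S : Finset (Fin d)) (z : Fin d → Sgn) : LatCell d :=
  (fun j => if j ∈ S ∧ z j = Sgn.pls then x j + 1 else x j,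
    S.filter (fun j => z j = Sgn.dot))

open Classical in
/-- The higher cup product `α ∪_m β` of `ℤ₂`-cochains on the cubical lattice `ℤ^d`,
evaluated on each cell via the identification of its subcells with tuples in `{•,+,−}^d`,
using the hypercubic formula `(α ∪_m β)(w) = Σ_{(z,z') ∈ Int_m} α(z) β(z')`. -/
noncomputable def latCup {d : ℕ} (m : ℕ) (α β : LatCochain d) : LatCochain d := fun w =>
  ∑ p ∈ (Finset.univ.filter
      (fun p : (Fin d → Sgn) × (Fin d → Sgn) => IntPairS m w.2 p.1 p.2)),
    α (cellFrom w.1 w.2 p.1) * β (cellFrom w.1 w.2 p.2)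

/-- Coboundary of a lattice `ℤ₂`-cochain: `(δα)(w)` is the sum of `α` over the boundary
cells of `w` (the cells obtained by unspanning one direction of `w` to its smaller or
larger face). -/
def latDelta {d : ℕ} (α : LatCochain d) : LatCochain d := fun w =>
  ∑ j ∈ w.2,
    (α (w.1, w.2.erase j) + α (Function.update w.1 j (w.1 j + 1), w.2.erase j))

/-- The indicator cochain of a lattice cell. -/
def indLat {d : ℕ} (c : LatCell d) : LatCochain d := fun w => if w = c then 1 else 0

/-- `∫γ`: the sum of the values of a lattice cochain over all `d`-cubes of the lattice
(as a `finsum`; the cochains to which this is applied have finite support). -/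
noncomputable def intLat {d : ℕ} (α : LatCochain d) : ZMod 2 :=
  ∑ᶠ x : Pt d, α (x, Finset.univ)

/-- The lattice `ℤ₂`-cochain determined by a `0`-cochain (a function on vertices). -/
def ofVertex {d : ℕ} (a : Pt d → ZMod 2) : LatCochain d := fun w =>
  if w.2 = ∅ then a w.1 else 0

open Function Finset

instance instDecidablePairCond {d : ℕ} (I : Finset (Fin d)) (j : Fin d) (a b : Sgn) :
    Decidable (pairCond I j a b) := by
  unfold pairCond; infer_instance

instance instDecidableIntPairS {d m : ℕ} (S : Finset (Fin d)) (z z' : Fin d → Sgn) :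
    Decidable (IntPairS m S z z') := by
  unfold IntPairS; infer_instance

lemma update_add_one_eq_add_single {d : ℕ} (x : Pt d) (i : Fin d) :
    update x i (x i + 1) = x + Pi.single i 1 := by
  ext j
  by_cases h : j = i
  · subst h; simp
  · simp [h]

lemma Function.HasFiniteSupport.comp_add_right {G M : Type*} [AddGroup G] [Zero M] {g : G → M}
    (hg : g.HasFiniteSupport) (c : G) : (fun x => g (x + c)).HasFiniteSupport :=
  hg.preimage (add_left_injective c).injOn

lemma finsum_add_comp_add_right_eq_zero {G R : Type*} [AddGroup G] [Ring R] [CharP R 2]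
    {g : G → R} (hg : g.HasFiniteSupport) (c : G) : ∑ᶠ x, (g x + g (x + c)) = 0 := by
  have hshift : ∑ᶠ x, g (x + c) = ∑ᶠ x, g x := finsum_comp_equiv (Equiv.addRight c)
  rw [finsum_add_distrib hg (hg.comp_add_right c), hshift, CharTwo.add_self_eq_zero]

section Lattice

variable {d : ℕ}

lemma hasFiniteSupport_ofVertex {f : Pt d → ZMod 2} (hf : f.HasFiniteSupport) :
    (ofVertex f).HasFiniteSupport := by
  refine (hf.image fun x => (x, (∅ : Finset (Fin d)))).subset fun w hw => ?_
  rw [mem_support, ofVertex] at hw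
  split_ifs at hw with h
  · exact ⟨w.1, hw, Prod.ext rfl h.symm⟩
  · exact absurd rfl hw

lemma hasFiniteSupport_latDelta {α : LatCochain d} (hα : α.HasFiniteSupport) :
    (latDelta α).HasFiniteSupport := by
  refine (hα.image2 (fun c (p : Fin d × Bool) =>
      ((if p.2 then c.1 - Pi.single p.1 1 else c.1), insert p.1 c.2)) Set.finite_univ).subset ?_
  intro w hw
  obtain ⟨j, hj, hne⟩ := exists_ne_zero_of_sum_ne_zero hw
  have hS : insert j (w.2.erase j) = w.2 := insert_erase hj
  by_cases h : α (w.1, w.2.erase j) = 0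
  · rw [h, zero_add] at hne
    refine ⟨_, hne, (j, true), Set.mem_univ _, Prod.ext ?_ hS⟩
    simp [update_add_one_eq_add_single]
  · exact ⟨_, h, (j, false), Set.mem_univ _, Prod.ext rfl hS⟩

lemma hasFiniteSupport_latCup (m : ℕ) {α : LatCochain d} (β : LatCochain d)
    (hα : α.HasFiniteSupport) : (latCup m α β).HasFiniteSupport := by
  refine (hα.image2 (fun c (p : Finset (Fin d) × (Fin d → Sgn)) =>
      (c.1 - fun j => if j ∈ p.1 ∧ p.2 j = Sgn.pls then 1 else 0, p.1))
      Set.finite_univ).subset ?_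
  intro w hw
  obtain ⟨p, -, hne⟩ := exists_ne_zero_of_sum_ne_zero hw
  refine ⟨_, left_ne_zero_of_mul hne, (w.2, p.1), Set.mem_univ _, Prod.ext ?_ rfl⟩
  ext j
  simp only [cellFrom, Pi.sub_apply]
  split_ifs <;> ring

lemma hasFiniteSupport_slice {α : LatCochain d} (hα : α.HasFiniteSupport) (S : Finset (Fin d)) :
    (fun x => α (x, S)).HasFiniteSupport :=
  hα.preimage (Prod.mk_left_injective S).injOn

lemma intLat_congr {α β : LatCochain d} (h : ∀ x, α (x, univ) = β (x, univ)) :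
    intLat α = intLat β :=
  finsum_congr h

lemma intLat_add {α β : LatCochain d} (hα : α.HasFiniteSupport) (hβ : β.HasFiniteSupport) :
    intLat (α + β) = intLat α + intLat β :=
  finsum_add_distrib (hasFiniteSupport_slice hα _) (hasFiniteSupport_slice hβ _)

theorem intLat_latDelta {γ : LatCochain d} (hγ : γ.HasFiniteSupport) :
    intLat (latDelta γ) = 0 := by
  have hface (j : Fin d) := hasFiniteSupport_slice hγ (univ.erase j)
  simp only [intLat, latDelta, update_add_one_eq_add_single]
  rw [finsum_sum_comm _ _ fun j _ => (hface j).fun_add ((hface j).comp_add_right _)]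
  exact sum_eq_zero fun j _ => finsum_add_comp_add_right_eq_zero (hface j) _

@[simp]
lemma ofVertex_apply_empty (f : Pt d → ZMod 2) (x : Pt d) : ofVertex f (x, ∅) = f x := by
  simp [ofVertex]

@[simp]
lemma ofVertex_apply_of_ne_empty (f : Pt d → ZMod 2) (x : Pt d) {S : Finset (Fin d)}
    (hS : S ≠ ∅) : ofVertex f (x, S) = 0 := by
  simp [ofVertex, hS]

@[simp]
lemma latDelta_apply_empty (α : LatCochain d) (x : Pt d) : latDelta α (x, ∅) = 0 := by
  simp [latDelta]

@[simp]
lemma latDelta_apply_singleton (α : LatCochain d) (x : Pt d) (i : Fin d) :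
    latDelta α (x, {i}) = α (x, ∅) + α (x + Pi.single i 1, ∅) := by
  simp [latDelta, update_add_one_eq_add_single]

end Lattice

section Square

open Sgn

local notation "e₁" => (Pi.single 0 1 : Pt 2)
local notation "e₂" => (Pi.single 1 1 : Pt 2)

lemma add_e₂_add_e₁ (x : Pt 2) : x + e₂ + e₁ = x + e₁ + e₂ := add_right_comm _ _ _

@[simp]
lemma latDelta_apply_univ (α : LatCochain 2) (x : Pt 2) :
    latDelta α (x, univ) = α (x, {1}) + α (x + e₁, {1}) + α (x, {0}) + α (x + e₂, {0}) := by
  have h₀ : univ.erase (0 : Fin 2) = {1} := by decide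
  have h₁ : univ.erase (1 : Fin 2) = {0} := by decide
  simp only [latDelta, Fin.sum_univ_two, update_add_one_eq_add_single, h₀, h₁]
  ring

@[simp]
lemma cellFrom_univ_pls_pls (x : Pt 2) : cellFrom x univ ![pls, pls] = (x + e₁ + e₂, ∅) := by
  ext j <;> fin_cases j <;> simp [cellFrom]

@[simp]
lemma cellFrom_univ_pls_dot (x : Pt 2) : cellFrom x univ ![pls, dot] = (x + e₁, {1}) := by
  ext j <;> fin_cases j <;> simp [cellFrom]

@[simp]
lemma cellFrom_univ_dot_pls (x : Pt 2) : cellFrom x univ ![dot, pls] = (x + e₂, {0}) := by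
  ext j <;> fin_cases j <;> simp [cellFrom]

@[simp]
lemma cellFrom_univ_dot_dot (x : Pt 2) : cellFrom x univ ![dot, dot] = (x, univ) := by
  ext j <;> fin_cases j <;> simp [cellFrom]

@[simp]
lemma cellFrom_univ_dot_mns (x : Pt 2) : cellFrom x univ ![dot, mns] = (x, {0}) := by
  ext j <;> fin_cases j <;> simp [cellFrom]

@[simp]
lemma cellFrom_univ_mns_dot (x : Pt 2) : cellFrom x univ ![mns, dot] = (x, {1}) := by
  ext j <;> fin_cases j <;> simp [cellFrom]

@[simp]
lemma cellFrom_univ_mns_mns (x : Pt 2) : cellFrom x univ ![mns, mns] = (x, ∅) := by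
  ext j <;> fin_cases j <;> simp [cellFrom]

@[simp]
lemma cellFrom_singleton_zero_pls_pls (x : Pt 2) : cellFrom x {0} ![pls, pls] = (x + e₁, ∅) := by
  ext j <;> fin_cases j <;> simp [cellFrom]

@[simp]
lemma cellFrom_singleton_zero_dot_pls (x : Pt 2) : cellFrom x {0} ![dot, pls] = (x, {0}) := by
  ext j <;> fin_cases j <;> simp [cellFrom]

@[simp]
lemma cellFrom_singleton_zero_mns_pls (x : Pt 2) : cellFrom x {0} ![mns, pls] = (x, ∅) := by
  ext j <;> fin_cases j <;> simp [cellFrom]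

@[simp]
lemma cellFrom_singleton_one_pls_pls (x : Pt 2) : cellFrom x {1} ![pls, pls] = (x + e₂, ∅) := by
  ext j <;> fin_cases j <;> simp [cellFrom]

@[simp]
lemma cellFrom_singleton_one_pls_dot (x : Pt 2) : cellFrom x {1} ![pls, dot] = (x, {1}) := by
  ext j <;> fin_cases j <;> simp [cellFrom]

@[simp]
lemma cellFrom_singleton_one_pls_mns (x : Pt 2) : cellFrom x {1} ![pls, mns] = (x, ∅) := by
  ext j <;> fin_cases j <;> simp [cellFrom]

@[simp]
lemma cellFrom_empty_pls_pls (x : Pt 2) : cellFrom x ∅ ![pls, pls] = (x, ∅) := by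
  ext j <;> fin_cases j <;> simp [cellFrom]

lemma latCup_zero_apply_univ (α β : LatCochain 2) (x : Pt 2) :
    latCup 0 α β (x, univ) =
      α (x + e₁ + e₂, ∅) * β (x, univ) + α (x + e₁, {1}) * β (x, {0})
        + α (x + e₂, {0}) * β (x, {1}) + α (x, univ) * β (x, ∅) := by
  have hpairs : univ.filter (fun p : Cell 2 × Cell 2 => IntPairS 0 univ p.1 p.2) =
      {(![pls, pls], ![dot, dot]), (![pls, dot], ![dot, mns]), (![dot, pls], ![mns, dot]),
        (![dot, dot], ![mns, mns])} := by decide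
  rw [latCup, filter_congr_decidable, hpairs, sum_insert (by decide), sum_insert (by decide),
    sum_insert (by decide), sum_singleton]
  simp only [cellFrom_univ_pls_pls, cellFrom_univ_pls_dot, cellFrom_univ_dot_pls,
    cellFrom_univ_dot_dot, cellFrom_univ_dot_mns, cellFrom_univ_mns_dot, cellFrom_univ_mns_mns]
  ring

lemma latCup_zero_apply_singleton_zero (α β : LatCochain 2) (x : Pt 2) :
    latCup 0 α β (x, {0}) = α (x + e₁, ∅) * β (x, {0}) + α (x, {0}) * β (x, ∅) := by
  have hpairs : univ.filter (fun p : Cell 2 × Cell 2 => IntPairS 0 {0} p.1 p.2) =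
      {(![pls, pls], ![dot, pls]), (![dot, pls], ![mns, pls])} := by decide
  rw [latCup, filter_congr_decidable, hpairs, sum_insert (by decide), sum_singleton]
  simp only [cellFrom_singleton_zero_pls_pls, cellFrom_singleton_zero_dot_pls,
    cellFrom_singleton_zero_mns_pls]

lemma latCup_zero_apply_singleton_one (α β : LatCochain 2) (x : Pt 2) :
    latCup 0 α β (x, {1}) = α (x + e₂, ∅) * β (x, {1}) + α (x, {1}) * β (x, ∅) := by
  have hpairs : univ.filter (fun p : Cell 2 × Cell 2 => IntPairS 0 {1} p.1 p.2) =
      {(![pls, pls], ![pls, dot]), (![pls, dot], ![pls, mns])} := by decide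
  rw [latCup, filter_congr_decidable, hpairs, sum_insert (by decide), sum_singleton]
  simp only [cellFrom_singleton_one_pls_pls, cellFrom_singleton_one_pls_dot,
    cellFrom_singleton_one_pls_mns]

lemma latCup_zero_apply_empty (α β : LatCochain 2) (x : Pt 2) :
    latCup 0 α β (x, ∅) = α (x, ∅) * β (x, ∅) := by
  have hpairs : univ.filter (fun p : Cell 2 × Cell 2 => IntPairS 0 ∅ p.1 p.2) =
      {(![pls, pls], ![pls, pls])} := by decide
  rw [latCup, filter_congr_decidable, hpairs, sum_singleton, cellFrom_empty_pls_pls]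

lemma latCup_one_apply_univ (α β : LatCochain 2) (x : Pt 2) :
    latCup 1 α β (x, univ) =
      α (x, univ) * β (x + e₂, {0}) + α (x, univ) * β (x, {1})
        + α (x, {0}) * β (x, univ) + α (x + e₁, {1}) * β (x, univ) := by
  have hpairs : univ.filter (fun p : Cell 2 × Cell 2 => IntPairS 1 univ p.1 p.2) =
      {(![dot, dot], ![dot, pls]), (![dot, dot], ![mns, dot]), (![dot, mns], ![dot, dot]),
        (![pls, dot], ![dot, dot])} := by decide
  rw [latCup, filter_congr_decidable, hpairs, sum_insert (by decide), sum_insert (by decide),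
    sum_insert (by decide), sum_singleton]
  simp only [cellFrom_univ_dot_dot, cellFrom_univ_dot_pls, cellFrom_univ_mns_dot,
    cellFrom_univ_dot_mns, cellFrom_univ_pls_dot]
  ring

noncomputable def semionDensity (α : LatCochain 2) : LatCochain 2 :=
  latCup 0 (latCup 0 α (latDelta α)) (latDelta α)

noncomputable def semionVariationDensity (α β : LatCochain 2) : LatCochain 2 :=
  latCup 0 (latCup 0 (latDelta α) β) (latDelta α)
    + latCup 1 (latDelta β) (latCup 0 (latDelta α + latDelta β) (latDelta α))
    + latCup 0 (latCup 0 (latDelta α) (latDelta β)) β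
    + latCup 0 (latCup 0 β (latDelta β)) (latDelta β)

noncomputable def semionVariationPrimitive (α β : LatCochain 2) : LatCochain 2 :=
  latCup 0 (latCup 0 α (latDelta β) + latCup 0 (latDelta β) β) α

variable {α β : LatCochain 2}

lemma hasFiniteSupport_semionDensity (hα : α.HasFiniteSupport) :
    (semionDensity α).HasFiniteSupport :=
  hasFiniteSupport_latCup _ _ (hasFiniteSupport_latCup _ _ hα)

lemma hasFiniteSupport_semionVariationDensity (hα : α.HasFiniteSupport)
    (hβ : β.HasFiniteSupport) : (semionVariationDensity α β).HasFiniteSupport :=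
  have hδα := hasFiniteSupport_latDelta hα
  have hδβ := hasFiniteSupport_latDelta hβ
  (((hasFiniteSupport_latCup _ _ (hasFiniteSupport_latCup _ _ hδα)).add
    (hasFiniteSupport_latCup _ _ hδβ)).add
    (hasFiniteSupport_latCup _ _ (hasFiniteSupport_latCup _ _ hδα))).add
    (hasFiniteSupport_latCup _ _ (hasFiniteSupport_latCup _ _ hβ))

lemma hasFiniteSupport_semionVariationPrimitive (hα : α.HasFiniteSupport)
    (hβ : β.HasFiniteSupport) : (semionVariationPrimitive α β).HasFiniteSupport :=
  hasFiniteSupport_latCup _ _ ((hasFiniteSupport_latCup _ _ hα).add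
    (hasFiniteSupport_latCup _ _ (hasFiniteSupport_latDelta hβ)))

theorem semionVariation_apply_univ_eq_latDelta (a v : Pt 2 → ZMod 2) (x : Pt 2) :
    (semionDensity (ofVertex a + ofVertex v) + semionDensity (ofVertex a)
        + semionVariationDensity (ofVertex a) (ofVertex v)) (x, univ)
      = latDelta (semionVariationPrimitive (ofVertex a) (ofVertex v)) (x, univ) := by
  simp only [semionDensity, semionVariationDensity, semionVariationPrimitive, Pi.add_apply,
    latCup_zero_apply_univ, latCup_zero_apply_singleton_zero, latCup_zero_apply_singleton_one,
    latCup_zero_apply_empty, latCup_one_apply_univ, latDelta_apply_univ, latDelta_apply_singleton,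
    latDelta_apply_empty, ofVertex_apply_empty, ofVertex_apply_of_ne_empty, ne_eq,
    singleton_ne_empty, not_false_eq_true, add_e₂_add_e₁, mul_zero, zero_mul, add_zero, zero_add]
  generalize a x = a₀₀, a (x + e₁) = a₁₀, a (x + e₂) = a₀₁, a (x + e₁ + e₂) = a₁₁,
    v x = v₀₀, v (x + e₁) = v₁₀, v (x + e₂) = v₀₁, v (x + e₁ + e₂) = v₁₁
  revert a₀₀ a₁₀ a₀₁ a₁₁ v₀₀ v₁₀ v₀₁ v₁₁
  decide

end Square

theorem doubleSemion_variation (a v : Pt 2 → ZMod 2)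
    (ha : (Function.support a).Finite) (hv : (Function.support v).Finite) :
    intLat (latCup 0
        (latCup 0 (ofVertex a + ofVertex v) (latDelta (ofVertex a + ofVertex v)))
        (latDelta (ofVertex a + ofVertex v)))
      + intLat (latCup 0 (latCup 0 (ofVertex a) (latDelta (ofVertex a)))
          (latDelta (ofVertex a)))
    = intLat
        (latCup 0 (latCup 0 (latDelta (ofVertex a)) (ofVertex v)) (latDelta (ofVertex a))
          + latCup 1 (latDelta (ofVertex v))
              (latCup 0 (latDelta (ofVertex a) + latDelta (ofVertex v))
                (latDelta (ofVertex a)))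
          + latCup 0 (latCup 0 (latDelta (ofVertex a)) (latDelta (ofVertex v))) (ofVertex v)
          + latCup 0 (latCup 0 (ofVertex v) (latDelta (ofVertex v)))
              (latDelta (ofVertex v))) := by
  change intLat (semionDensity (ofVertex a + ofVertex v)) + intLat (semionDensity (ofVertex a))
    = intLat (semionVariationDensity (ofVertex a) (ofVertex v))
  have hA := hasFiniteSupport_ofVertex ha
  have hV := hasFiniteSupport_ofVertex hv
  have hD₁ := hasFiniteSupport_semionDensity (hA.add hV)
  have hD₂ := hasFiniteSupport_semionDensity hA
  have hstokes := intLat_latDelta (hasFiniteSupport_semionVariationPrimitive hA hV)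
  rw [← intLat_congr (semionVariation_apply_univ_eq_latDelta a v),
    intLat_add (hD₁.add hD₂) (hasFiniteSupport_semionVariationDensity hA hV),
    intLat_add hD₁ hD₂] at hstokes
  exact (eq_neg_of_add_eq_zero_left hstokes).trans (ZMod.neg_eq_self_mod_two _)
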